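/- arXiv:2306.15185 — 2 statements merged into one kernel-verified Lean document; each statement's English description precedes it below -/
import Mathlib

section
/- For the truncated Poisson (Erlang) stationary distribution π_C on {0,…,C} with parameter ρ > 0, the blocking probability π_C(C) = (ρ^C/C!) / (∑_{y=0}^{C} ρ^y/y!) is strictly decreasing in the capacity C. -/
open Finset

/-- The Erlang-B blocking probability
`B(C, ρ) = (ρ^C/C!) / ∑_{y=0}^{C} ρ^y/y!` is strictly decreasing in the
capacity `C`. -/
theorem erlangB_strict_anti_in_capacity
    (ρ : ℝ) (hρ : 0 < ρ) (B : ℕ → ℝ → ℝ)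
    (hB : ∀ C ρ', B C ρ' = (ρ' ^ C / (Nat.factorial C : ℝ)) /
      (∑ y ∈ range (C + 1), ρ' ^ y / (Nat.factorial y : ℝ))) :
    ∀ C : ℕ, B (C + 1) ρ < B C ρ := by
  intro C
  have hapos : ∀ y : ℕ, 0 < ρ ^ y / (Nat.factorial y : ℝ) := fun y =>
    div_pos (pow_pos hρ y) (by exact_mod_cast Nat.factorial_pos y)
  have hS : ∀ n : ℕ, 0 < ∑ y ∈ range (n + 1), ρ ^ y / (Nat.factorial y : ℝ) :=
    fun n => Finset.sum_pos (fun i _ => hapos i) (by simp)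
  rw [hB, hB, div_lt_div_iff₀ (hS _) (hS _)]
  calc ρ ^ (C + 1) / ((Nat.factorial (C + 1) : ℝ)) *
        ∑ y ∈ range (C + 1), ρ ^ y / (Nat.factorial y : ℝ)
      = ∑ y ∈ range (C + 1),
          ρ ^ (C + 1) / ((Nat.factorial (C + 1) : ℝ)) * (ρ ^ y / (Nat.factorial y : ℝ)) := by
        rw [Finset.mul_sum]
    _ ≤ ∑ y ∈ range (C + 1),
          ρ ^ C / ((Nat.factorial C : ℝ)) * (ρ ^ (y + 1) / (Nat.factorial (y + 1) : ℝ)) := by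
        apply Finset.sum_le_sum
        intro y hy
        have hyC : y + 1 ≤ C + 1 := Nat.succ_le_succ (Nat.lt_succ_iff.mp (Finset.mem_range.mp hy))
        rw [div_mul_div_comm, div_mul_div_comm, ← pow_add, ← pow_add]
        have hexp : C + 1 + y = C + (y + 1) := by ring
        rw [hexp]
        have hden : (Nat.factorial C : ℝ) * (Nat.factorial (y + 1) : ℝ) ≤
            (Nat.factorial (C + 1) : ℝ) * (Nat.factorial y : ℝ) := by
          have : Nat.factorial C * Nat.factorial (y + 1) ≤
              Nat.factorial (C + 1) * Nat.factorial y := by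
            rw [Nat.factorial_succ, Nat.factorial_succ]
            calc Nat.factorial C * ((y + 1) * Nat.factorial y)
                ≤ Nat.factorial C * ((C + 1) * Nat.factorial y) := by
                  exact Nat.mul_le_mul_left _ (Nat.mul_le_mul_right _ hyC)
              _ = (C + 1) * Nat.factorial C * Nat.factorial y := by ring
          exact_mod_cast this
        apply div_le_div_of_nonneg_left (le_of_lt (pow_pos hρ _)) _ hden
        positivity
    _ < (∑ y ∈ range (C + 1),
          ρ ^ C / ((Nat.factorial C : ℝ)) * (ρ ^ (y + 1) / (Nat.factorial (y + 1) : ℝ))) +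
        ρ ^ C / ((Nat.factorial C : ℝ)) * (ρ ^ 0 / (Nat.factorial 0 : ℝ)) := by
        exact lt_add_of_pos_right _ (mul_pos (hapos C) (hapos 0))
    _ = ρ ^ C / ((Nat.factorial C : ℝ)) *
          ∑ y ∈ range (C + 1 + 1), ρ ^ y / (Nat.factorial y : ℝ) := by
        conv_rhs => rw [Finset.mul_sum, Finset.sum_range_succ']
end

section
/- The function ρ ↦ ρ(1 − B(C, ρ)) (stationary throughput of an M/M/C/C system, i.e., carried load) is strictly increasing in the offered load ρ > 0 for every fixed capacity C ∈ ℕ with C ≥ 1. -/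
open Finset

/-- The carried load `ρ(1 − B(C, ρ))` of an M/M/C/C system is strictly
increasing in the offered load `ρ > 0` for every fixed capacity `C ≥ 1`,
where `B(C, ρ)` is the Erlang-B blocking probability. -/
theorem carried_load_strict_mono_in_offered_load
    (C : ℕ) (hC : 1 ≤ C) (B : ℕ → ℝ → ℝ)
    (hB : ∀ C' ρ, B C' ρ = (ρ ^ C' / (Nat.factorial C' : ℝ)) /
      (∑ y ∈ range (C' + 1), ρ ^ y / (Nat.factorial y : ℝ))) :
    ∀ ρ₁ ρ₂ : ℝ, 0 < ρ₁ → ρ₁ < ρ₂ →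
      ρ₁ * (1 - B C ρ₁) < ρ₂ * (1 - B C ρ₂) := by
  intro ρ₁ ρ₂ h1 h12
  have h2 : 0 < ρ₂ := h1.trans h12
  set a : ℝ → ℕ → ℝ := fun ρ y => ρ ^ y / (Nat.factorial y : ℝ) with ha
  have hfac : ∀ y : ℕ, (0:ℝ) < (Nat.factorial y : ℝ) := by
    intro y; exact_mod_cast y.factorial_pos
  have hapos : ∀ ρ : ℝ, 0 < ρ → ∀ y, 0 < a ρ y := by
    intro ρ hρ y
    exact div_pos (pow_pos hρ y) (hfac y)
  have hD : ∀ ρ : ℝ, 0 < ρ → 0 < ∑ y ∈ range (C + 1), a ρ y := by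
    intro ρ hρ
    apply Finset.sum_pos (fun y _ => hapos ρ hρ y)
    exact nonempty_range_iff.mpr (Nat.succ_ne_zero C)
  -- carried load as ratio of sums
  have key : ∀ ρ : ℝ, 0 < ρ → ρ * (1 - B C ρ) =
      (∑ y ∈ range (C + 1), (y : ℝ) * a ρ y) / (∑ y ∈ range (C + 1), a ρ y) := by
    intro ρ hρ
    have hDpos := hD ρ hρ
    have hBval : B C ρ = a ρ C / ∑ y ∈ range (C + 1), a ρ y := by
      rw [hB]
    have hstep : ∀ y : ℕ, ρ * a ρ y = ((y : ℝ) + 1) * a ρ (y + 1) := by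
      intro y
      have hf : (Nat.factorial (y + 1) : ℝ) = ((y : ℝ) + 1) * (Nat.factorial y : ℝ) := by
        push_cast [Nat.factorial_succ]; ring
      simp only [ha]
      rw [hf, pow_succ]
      have h0 : ((y : ℝ) + 1) ≠ 0 := by positivity
      field_simp
    have hN : ρ * (∑ y ∈ range C, a ρ y) = ∑ y ∈ range (C + 1), (y : ℝ) * a ρ y := by
      rw [Finset.mul_sum, Finset.sum_range_succ' (fun y => (y : ℝ) * a ρ y) C]
      simp only [Nat.cast_zero, zero_mul, add_zero]
      apply Finset.sum_congr rfl
      intro y _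
      rw [hstep y]
      push_cast
      ring
    rw [hBval]
    rw [eq_div_iff (ne_of_gt hDpos)]
    have hsub : (1 - a ρ C / ∑ y ∈ range (C + 1), a ρ y) * (∑ y ∈ range (C + 1), a ρ y)
        = ∑ y ∈ range C, a ρ y := by
      have hsplit : (∑ y ∈ range (C + 1), a ρ y) = (∑ y ∈ range C, a ρ y) + a ρ C :=
        Finset.sum_range_succ _ _
      field_simp
      linarith [hsplit]
    calc ρ * (1 - a ρ C / ∑ y ∈ range (C + 1), a ρ y) * (∑ y ∈ range (C + 1), a ρ y)
        = ρ * ((1 - a ρ C / ∑ y ∈ range (C + 1), a ρ y) * (∑ y ∈ range (C + 1), a ρ y)) := by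
          ring
      _ = ρ * (∑ y ∈ range C, a ρ y) := by rw [hsub]
      _ = _ := hN
  rw [key ρ₁ h1, key ρ₂ h2, div_lt_div_iff₀ (hD ρ₁ h1) (hD ρ₂ h2)]
  -- pointwise cross inequality
  have hkey : ∀ y z : ℕ, z < y → a ρ₂ z * a ρ₁ y < a ρ₂ y * a ρ₁ z := by
    intro y z hzy
    obtain ⟨k, hk⟩ := Nat.exists_eq_add_of_lt hzy
    have hcore : ρ₂ ^ z * ρ₁ ^ y < ρ₂ ^ y * ρ₁ ^ z := by
      subst hk
      rw [show z + k + 1 = z + (k + 1) by ring, pow_add ρ₁, pow_add ρ₂]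
      have hp : ρ₁ ^ (k + 1) < ρ₂ ^ (k + 1) :=
        pow_lt_pow_left₀ h12 h1.le (Nat.succ_ne_zero k)
      nlinarith [pow_pos h1 z, pow_pos h2 z, mul_pos (pow_pos h2 z) (pow_pos h1 z)]
    simp only [ha]
    rw [div_mul_div_comm, div_mul_div_comm]
    have hd : (0:ℝ) < (Nat.factorial z : ℝ) * (Nat.factorial y : ℝ) :=
      mul_pos (hfac z) (hfac y)
    rw [div_lt_div_iff₀ hd (mul_pos (hfac y) (hfac z))]
    nlinarith [hcore, hd]
  -- double sum expansions
  have expand : ∀ (b c : ℕ → ℝ),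
      (∑ y ∈ range (C + 1), b y) * (∑ z ∈ range (C + 1), c z)
        = ∑ y ∈ range (C + 1), ∑ z ∈ range (C + 1), b y * c z := by
    intro b c
    rw [Finset.sum_mul]
    exact Finset.sum_congr rfl fun y _ => Finset.mul_sum _ _ _
  set T : ℝ := ∑ y ∈ range (C + 1), ∑ z ∈ range (C + 1),
      ((y : ℝ) - z) * (a ρ₂ y * a ρ₁ z) with hT
  have hTval : (∑ y ∈ range (C + 1), (y : ℝ) * a ρ₂ y) * (∑ y ∈ range (C + 1), a ρ₁ y)
      - (∑ y ∈ range (C + 1), (y : ℝ) * a ρ₁ y) * (∑ y ∈ range (C + 1), a ρ₂ y) = T := by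
    rw [expand, expand, hT]
    have hswap : (∑ y ∈ range (C + 1), ∑ z ∈ range (C + 1), (y : ℝ) * a ρ₁ y * a ρ₂ z)
        = ∑ y ∈ range (C + 1), ∑ z ∈ range (C + 1), (z : ℝ) * (a ρ₂ y * a ρ₁ z) := by
      rw [Finset.sum_comm]
      exact Finset.sum_congr rfl fun y _ => Finset.sum_congr rfl fun z _ => by ring
    rw [hswap, ← Finset.sum_sub_distrib]
    apply Finset.sum_congr rfl
    intro y _
    rw [← Finset.sum_sub_distrib]
    exact Finset.sum_congr rfl fun z _ => by ring
  -- symmetrized sum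
  set G : ℝ := ∑ y ∈ range (C + 1), ∑ z ∈ range (C + 1),
      ((y : ℝ) - z) * (a ρ₂ y * a ρ₁ z - a ρ₂ z * a ρ₁ y) with hG
  have hG2T : G = 2 * T := by
    rw [hG, hT]
    have hswap2 : (∑ y ∈ range (C + 1), ∑ z ∈ range (C + 1),
        ((z : ℝ) - y) * (a ρ₂ z * a ρ₁ y))
        = ∑ y ∈ range (C + 1), ∑ z ∈ range (C + 1), ((y : ℝ) - z) * (a ρ₂ y * a ρ₁ z) := by
      rw [Finset.sum_comm]
    calc (∑ y ∈ range (C + 1), ∑ z ∈ range (C + 1),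
          ((y : ℝ) - z) * (a ρ₂ y * a ρ₁ z - a ρ₂ z * a ρ₁ y))
        = (∑ y ∈ range (C + 1), ∑ z ∈ range (C + 1),
            (((y : ℝ) - z) * (a ρ₂ y * a ρ₁ z) + ((z : ℝ) - y) * (a ρ₂ z * a ρ₁ y))) := by
          exact Finset.sum_congr rfl fun y _ => Finset.sum_congr rfl fun z _ => by ring
      _ = (∑ y ∈ range (C + 1), ∑ z ∈ range (C + 1), ((y : ℝ) - z) * (a ρ₂ y * a ρ₁ z))
          + (∑ y ∈ range (C + 1), ∑ z ∈ range (C + 1), ((z : ℝ) - y) * (a ρ₂ z * a ρ₁ y)) := by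
          rw [← Finset.sum_add_distrib]
          exact Finset.sum_congr rfl fun y _ => (Finset.sum_add_distrib)
      _ = 2 * ∑ y ∈ range (C + 1), ∑ z ∈ range (C + 1), ((y : ℝ) - z) * (a ρ₂ y * a ρ₁ z) := by
          rw [hswap2]; ring
  -- each term of G is nonnegative
  have hterm : ∀ y z : ℕ, 0 ≤ ((y : ℝ) - z) * (a ρ₂ y * a ρ₁ z - a ρ₂ z * a ρ₁ y) := by
    intro y z
    rcases lt_trichotomy y z with h | h | h
    · have hy : (y : ℝ) < z := by exact_mod_cast h
      have := hkey z y h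
      nlinarith
    · subst h; simp
    · apply mul_nonneg
      · have : (z : ℝ) < y := by exact_mod_cast h
        linarith
      · have := hkey y z h
        linarith
  have hGpos : 0 < G := by
    rw [hG]
    have h1mem : 1 ∈ range (C + 1) := mem_range.mpr (by omega)
    apply Finset.sum_pos' (fun y _ => Finset.sum_nonneg fun z _ => hterm y z)
    refine ⟨1, h1mem, ?_⟩
    apply Finset.sum_pos' (fun z _ => hterm 1 z)
    refine ⟨0, mem_range.mpr (by omega), ?_⟩
    have := hkey 1 0 (by omega)
    have h10 : ((1 : ℕ) : ℝ) - ((0 : ℕ) : ℝ) = 1 := by norm_num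
    rw [h10, one_mul]
    linarith
  linarith [hTval, hG2T, hGpos]
end
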